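/- arXiv:0907.4767 — 3 statements merged into one kernel-verified Lean document; each statement's English description precedes it below -/
import Mathlib

section
/- For any positive integer q, there exists a constant c_q > 0 such that for any real numbers φ₁,…,φ_N, any non-negative reals a₁,…,a_N, and any T > 0, one has c_q·(∑_{n=1}^N a_n²)^q ≤ (1/(2T)) ∫_{-T}^{T} |∑_{n=1}^N a_n e^{i t φ_n}|^{2q} dt. -/
open MeasureTheory Complex intervalIntegral

noncomputable def Dint (T ξ : ℝ) : ℂ := ∫ s in (0:ℝ)..T, Complex.exp (Complex.I * s * ξ)

lemma Dint_zero (T : ℝ) : Dint T 0 = T := by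
  simp [Dint]

lemma Dint_conj (T ξ : ℝ) :
    (∫ u in (0:ℝ)..T, Complex.exp (-(Complex.I * u * ξ))) = starRingEnd ℂ (Dint T ξ) := by
  have h : ∀ s : ℝ, Complex.exp (-(Complex.I * s * ξ))
      = starRingEnd ℂ (Complex.exp (Complex.I * s * ξ)) := by
    intro s
    rw [← Complex.exp_conj]
    congr 1
    simp [Complex.conj_I]
  simp only [h]
  unfold Dint intervalIntegral
  rw [map_sub, ← integral_conj, ← integral_conj]

lemma lemA {ι : Type*} [Fintype ι] (b : ι → ℝ) (hb : ∀ n, 0 ≤ b n) (ψ : ι → ℝ)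
    (T : ℝ) (hT : 0 < T) :
    T * ∑ n, (b n) ^ 2 ≤ ∫ t in (-T)..T, ‖∑ n, (b n : ℂ) * Complex.exp (Complex.I * t * ψ n)‖ ^ 2 := by
  set F : ℝ → ℂ := fun t => ∑ n, (b n : ℂ) * Complex.exp (Complex.I * t * ψ n) with hF
  have hFcont : Continuous F := by
    apply continuous_finset_sum
    intro n _
    fun_prop
  -- pointwise expansion of |F (s-u)|^2 as complex number
  have hexp : ∀ s u : ℝ, (‖F (s - u)‖ ^ 2 : ℂ) =
      ∑ m, ∑ n, (b m : ℂ) * b n * Complex.exp (-(Complex.I * u * (ψ m - ψ n)))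
        * Complex.exp (Complex.I * s * (ψ m - ψ n)) := by
    intro s u
    rw [← Complex.mul_conj']
    simp only [hF, map_sum, Finset.sum_mul_sum, map_mul, Complex.conj_ofReal, ← Complex.exp_conj]
    refine Finset.sum_congr rfl fun m _ => Finset.sum_congr rfl fun n _ => ?_
    conv_lhs => rw [mul_mul_mul_comm, ← Complex.exp_add]
    conv_rhs => rw [mul_assoc, ← Complex.exp_add]
    congr 1
    rw [Complex.conj_I]
    push_cast
    ring_nf
  -- complex-valued version of inner integral
  set G : ℝ → ℂ := fun u => ∑ m, ∑ n, (b m : ℂ) * b n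
      * Complex.exp (-(Complex.I * u * ((ψ m : ℂ) - (ψ n : ℂ)))) * Dint T (ψ m - ψ n) with hG
  set g : ℝ → ℝ := fun u => ∫ s in (0:ℝ)..T, ‖F (s - u)‖ ^ 2 with hg
  have hgu : ∀ u : ℝ, (g u : ℂ) = G u := by
    intro u
    rw [hg]
    simp only
    rw [← intervalIntegral.integral_ofReal]
    have : ∀ s : ℝ, ((‖F (s - u)‖ ^ 2 : ℝ) : ℂ) = ∑ m, ∑ n, ((b m : ℂ) * b n
        * Complex.exp (-(Complex.I * u * ((ψ m : ℂ) - (ψ n : ℂ)))))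
        * Complex.exp (Complex.I * s * ((ψ m : ℂ) - (ψ n : ℂ))) := by
      intro s
      push_cast
      rw [hexp s u]
    simp only [this]
    rw [intervalIntegral.integral_finset_sum]
    · refine Finset.sum_congr rfl fun m _ => ?_
      rw [intervalIntegral.integral_finset_sum]
      · refine Finset.sum_congr rfl fun n _ => ?_
        rw [intervalIntegral.integral_const_mul]
        congr 1
        unfold Dint
        push_cast
        rfl
      · intro n _
        apply Continuous.intervalIntegrable
        fun_prop
    · intro m _
      apply continuous_finset_sum _ (fun n _ => by fun_prop) |>.intervalIntegrable
  have hGcont : Continuous G := by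
    refine continuous_finset_sum _ fun m _ => continuous_finset_sum _ fun n _ => ?_
    fun_prop
  have hgcont : Continuous g := by
    have : g = fun u => (G u).re := by
      funext u
      rw [← hgu u]
      simp
    rw [this]
    exact Complex.continuous_re.comp hGcont
  -- value of the double integral
  set R : ℝ := ∑ m, ∑ n, b m * b n * Complex.normSq (Dint T (ψ m - ψ n)) with hR
  have hXR : ∫ u in (0:ℝ)..T, g u = R := by
    have h1 : ((∫ u in (0:ℝ)..T, g u : ℝ) : ℂ) = ∫ u in (0:ℝ)..T, G u := by
      rw [← intervalIntegral.integral_ofReal]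
      exact intervalIntegral.integral_congr fun u _ => hgu u
    have h2 : (∫ u in (0:ℝ)..T, G u) = (R : ℂ) := by
      rw [hG]
      rw [intervalIntegral.integral_finset_sum (fun m _ =>
        (continuous_finset_sum _ fun n _ => by fun_prop).intervalIntegrable _ _)]
      rw [hR]
      push_cast
      refine Finset.sum_congr rfl fun m _ => ?_
      rw [intervalIntegral.integral_finset_sum (fun n _ => (by fun_prop :
        Continuous fun u : ℝ => (b m : ℂ) * b n
          * Complex.exp (-(Complex.I * u * ((ψ m : ℂ) - (ψ n : ℂ)))) * Dint T (ψ m - ψ n)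
        ).intervalIntegrable _ _)]
      refine Finset.sum_congr rfl fun n _ => ?_
      have : (fun u : ℝ => (b m : ℂ) * b n
          * Complex.exp (-(Complex.I * u * ((ψ m : ℂ) - (ψ n : ℂ)))) * Dint T (ψ m - ψ n))
          = fun u : ℝ => ((b m : ℂ) * b n * Dint T (ψ m - ψ n))
            * Complex.exp (-(Complex.I * u * ((ψ m : ℂ) - (ψ n : ℂ)))) := by
        funext u; ring
      rw [this, intervalIntegral.integral_const_mul]
      have hc : (∫ u in (0:ℝ)..T, Complex.exp (-(Complex.I * u * ((ψ m : ℂ) - (ψ n : ℂ)))))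
          = starRingEnd ℂ (Dint T (ψ m - ψ n)) := by
        rw [← Dint_conj T (ψ m - ψ n)]
        push_cast
        rfl
      rw [hc]
      rw [show ((b m : ℂ) * b n * Dint T (ψ m - ψ n)) * starRingEnd ℂ (Dint T (ψ m - ψ n))
        = (b m : ℂ) * b n * (Dint T (ψ m - ψ n) * starRingEnd ℂ (Dint T (ψ m - ψ n))) by ring]
      rw [Complex.mul_conj]
    have := h1.trans h2
    exact_mod_cast this
  -- diagonal lower bound for R
  have hRlow : T ^ 2 * ∑ n, b n ^ 2 ≤ R := by
    rw [hR, Finset.mul_sum]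
    refine Finset.sum_le_sum fun m _ => ?_
    have hdiag : T ^ 2 * b m ^ 2 = b m * b m * Complex.normSq (Dint T (ψ m - ψ m)) := by
      rw [sub_self, Dint_zero, Complex.normSq_ofReal]
      ring
    rw [hdiag]
    refine Finset.single_le_sum (f := fun n => b m * b n * Complex.normSq (Dint T (ψ m - ψ n))) (fun n _ => ?_) (Finset.mem_univ m)
    exact mul_nonneg (mul_nonneg (hb m) (hb n)) (Complex.normSq_nonneg _)
  -- upper bound for g
  set C : ℝ := ∫ t in (-T)..T, ‖F t‖ ^ 2 with hC
  have hh : Continuous fun t => ‖F t‖ ^ 2 := by fun_prop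
  have hgle : ∀ u ∈ Set.Icc (0:ℝ) T, g u ≤ C := by
    intro u hu
    rw [hg]
    simp only
    rw [intervalIntegral.integral_comp_sub_right (fun t => ‖F t‖ ^ 2) u]
    refine intervalIntegral.integral_mono_interval (by linarith [hu.2]) (by linarith [hT.le])
      (by linarith [hu.1]) ?_ (hh.intervalIntegrable _ _)
    filter_upwards with t using by positivity
  have hXle : ∫ u in (0:ℝ)..T, g u ≤ T * C := by
    calc ∫ u in (0:ℝ)..T, g u ≤ ∫ _u in (0:ℝ)..T, C := by
          refine intervalIntegral.integral_mono_on hT.le (hgcont.intervalIntegrable _ _)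
            (intervalIntegrable_const) hgle
      _ = T * C := by simp
  have : T ^ 2 * ∑ n, b n ^ 2 ≤ T * C := by
    calc T ^ 2 * ∑ n, b n ^ 2 ≤ R := hRlow
      _ = ∫ u in (0:ℝ)..T, g u := hXR.symm
      _ ≤ T * C := hXle
  rw [hC] at this
  nlinarith [hT]

theorem stmt_0 (q : ℕ) (hq : 0 < q) :
    ∃ c : ℝ, 0 < c ∧ ∀ (N : ℕ) (φ : Fin N → ℝ) (a : Fin N → ℝ),
      (∀ n, 0 ≤ a n) → ∀ T : ℝ, 0 < T →
      c * (∑ n, (a n) ^ 2) ^ q ≤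
        (1 / (2 * T)) *
          ∫ t in (-T)..T, ‖∑ n, (a n : ℂ) * Complex.exp (Complex.I * t * φ n)‖ ^ (2 * q) := by
  refine ⟨1/2, by norm_num, ?_⟩
  intro N φ a ha T hT
  have key := lemA (ι := (Fin q → Fin N)) (fun ν => ∏ j, a (ν j))
    (fun ν => Finset.prod_nonneg fun j _ => ha (ν j)) (fun ν => ∑ j, φ (ν j)) T hT
  have hpt : ∀ t : ℝ,
      (∑ ν : Fin q → Fin N, ((∏ j, a (ν j) : ℝ) : ℂ)
        * Complex.exp (Complex.I * t * ((∑ j, φ (ν j) : ℝ) : ℂ)))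
      = (∑ n, (a n : ℂ) * Complex.exp (Complex.I * t * φ n)) ^ q := by
    intro t
    rw [Finset.sum_pow', Fintype.piFinset_univ]
    refine Finset.sum_congr rfl fun ν _ => ?_
    rw [Finset.prod_mul_distrib, ← Complex.exp_sum]
    push_cast
    rw [Finset.mul_sum]
  have hcoef : (∑ ν : Fin q → Fin N, (∏ j, a (ν j)) ^ 2) = (∑ n, a n ^ 2) ^ q := by
    rw [Finset.sum_pow', Fintype.piFinset_univ]
    exact Finset.sum_congr rfl fun ν _ => (Finset.prod_pow _ _ _).symm
  have hint : (∫ t in (-T)..T, ‖∑ ν : Fin q → Fin N, ((∏ j, a (ν j) : ℝ) : ℂ)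
        * Complex.exp (Complex.I * t * ((∑ j, φ (ν j) : ℝ) : ℂ))‖ ^ 2)
      = ∫ t in (-T)..T, ‖∑ n, (a n : ℂ) * Complex.exp (Complex.I * t * φ n)‖ ^ (2 * q) := by
    refine intervalIntegral.integral_congr fun t _ => ?_
    rw [hpt t, norm_pow, ← pow_mul, mul_comm q 2]
  rw [hcoef, hint] at key
  have h2T : (0:ℝ) < 2 * T := by linarith
  rw [div_mul_eq_mul_div, one_mul, one_div_mul_eq_div, div_le_div_iff₀ (by norm_num) h2T]
  nlinarith [key]
end

section
/- Let q be a positive integer, let φ₁,…,φ_N be reals, let c₁,…,c_N be complex numbers and a₁,…,a_N non-negative reals with |c_n| ≤ a_n for all n. Then for any reals T > 0 and T₀, ∫_{|t−T₀| ≤ T} |∑_{n=1}^N c_n e^{i t φ_n}|^{2q} dt ≤ 3 ∫_{|t| ≤ T} |∑_{n=1}^N a_n e^{i t φ_n}|^{2q} dt. -/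
/-!
The tent `tent T t = max 0 (1 - |t| / T)` is supported on `[-T, T]`, bounded by `1`, and its
Fourier transform `T sinc² (Tθ/2)` is nonnegative. Expanding `|S|²` for an exponential sum
`S t = ∑ cᵢ e^{itφᵢ}` gives `∫ tent(t) |S t|² dt = ∑ᵢⱼ cᵢ c̄ⱼ T sinc² (T(φᵢ - φⱼ)/2)`, a quantity
that can only grow when each `cᵢ` is replaced by a majorant `aᵢ ≥ |cᵢ|`. Translating the tent merely
rotates the coefficients, and `|S|^{2q} = |S^q|²` with `S^q` again an exponential sum, so the same
bound holds for every translate of the tent and every even power. The indicator of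
`[T₀ - T, T₀ + T]` is dominated by the three tents centred at `T₀` and `T₀ ± T`, whence the `3`.
-/

open MeasureTheory Complex ComplexConjugate

lemma intervalIntegral_le_integral_mul {g w : ℝ → ℝ} {a b : ℝ} (hab : a ≤ b) (hg : Continuous g)
    (hg₀ : ∀ t, 0 ≤ g t) (hw₀ : ∀ t, 0 ≤ w t) (hwg : Integrable fun t => w t * g t)
    (hw₁ : ∀ t ∈ Set.Icc a b, 1 ≤ w t) :
    ∫ t in a..b, g t ≤ ∫ t, w t * g t := by
  rw [intervalIntegral.integral_of_le hab]
  calc ∫ t in Set.Ioc a b, g t ≤ ∫ t in Set.Ioc a b, w t * g t :=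
        setIntegral_mono_on hg.integrableOn_Ioc hwg.integrableOn measurableSet_Ioc fun t ht =>
          le_mul_of_one_le_left (hg₀ t) (hw₁ t (Set.Ioc_subset_Icc_self ht))
    _ ≤ ∫ t, w t * g t :=
        setIntegral_le_integral hwg <|
          Filter.Eventually.of_forall fun t => mul_nonneg (hw₀ t) (hg₀ t)

noncomputable def tent (T t : ℝ) : ℝ := max 0 (1 - |t| / T)

lemma tent_nonneg (T t : ℝ) : 0 ≤ tent T t := le_max_left _ _

lemma tent_le_one {T : ℝ} (hT : 0 ≤ T) (t : ℝ) : tent T t ≤ 1 :=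
  max_le zero_le_one (sub_le_self _ (by positivity))

lemma tent_neg (T t : ℝ) : tent T (-t) = tent T t := by simp [tent]

lemma tent_of_abs_le {T t : ℝ} (hT : 0 < T) (h : |t| ≤ T) : tent T t = 1 - |t| / T :=
  max_eq_right (sub_nonneg.2 ((div_le_one hT).2 h))

lemma tent_of_le_abs {T t : ℝ} (hT : 0 < T) (h : T ≤ |t|) : tent T t = 0 :=
  max_eq_left (sub_nonpos.2 ((le_div_iff₀ hT).2 (by linarith)))

lemma tent_of_mem_Icc {T t : ℝ} (hT : 0 < T) (ht : t ∈ Set.Icc 0 T) : tent T t = (T - t) / T := by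
  rw [tent_of_abs_le hT (abs_le.2 ⟨by linarith [ht.1], ht.2⟩), abs_of_nonneg ht.1]
  field_simp

lemma continuous_tent (T : ℝ) : Continuous (tent T) := by
  unfold tent; fun_prop

lemma support_tent_subset {T : ℝ} (hT : 0 < T) : Function.support (tent T) ⊆ Set.Ioo (-T) T := by
  intro t ht
  by_contra h
  exact ht (tent_of_le_abs hT (by
    rw [Set.mem_Ioo, not_and_or, not_lt, not_lt] at h
    rcases h with h | h
    · rw [abs_of_neg (by linarith)]; linarith
    · rw [abs_of_pos (by linarith)]; linarith))

lemma one_le_tent_add_tent_add_tent {T τ t : ℝ} (hT : 0 < T)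
    (ht : t ∈ Set.Icc (τ - T) (τ + T)) :
    1 ≤ tent T (t - τ) + tent T (t - (τ - T)) + tent T (t - (τ + T)) := by
  have hs : |t - τ| ≤ T := abs_le.2 ⟨by linarith [ht.1], by linarith [ht.2]⟩
  rw [show t - (τ - T) = t - τ + T by ring, show t - (τ + T) = t - τ - T by ring]
  generalize t - τ = s at hs ⊢
  rcases abs_le.1 hs with ⟨h₁, h₂⟩
  rcases le_total 0 s with h | h
  · rw [tent_of_abs_le hT hs, tent_of_abs_le hT (t := s - T) (abs_le.2 ⟨by linarith, by linarith⟩),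
      abs_of_nonneg h, abs_of_nonpos (by linarith)]
    have := mul_nonneg hT.le (tent_nonneg T (s + T))
    field_simp
    linarith
  · rw [tent_of_abs_le hT hs, tent_of_abs_le hT (t := s + T) (abs_le.2 ⟨by linarith, by linarith⟩),
      abs_of_nonpos h, abs_of_nonneg (by linarith)]
    have := mul_nonneg hT.le (tent_nonneg T (s - T))
    field_simp
    linarith

lemma hasCompactSupport_tent_sub {T : ℝ} (hT : 0 < T) (τ : ℝ) :
    HasCompactSupport fun t => tent T (t - τ) := by
  refine HasCompactSupport.of_support_subset_isCompact (isCompact_Icc (a := τ - T) (b := τ + T)) ?_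
  intro t ht
  have := support_tent_subset hT ht
  constructor <;> linarith [this.1, this.2]

lemma integrable_tent_sub_smul {E : Type*} [NormedAddCommGroup E] [NormedSpace ℝ E] {T : ℝ}
    (hT : 0 < T) {g : ℝ → E} (hg : Continuous g) (τ : ℝ) :
    Integrable fun t => tent T (t - τ) • g t :=
  Continuous.integrable_of_hasCompactSupport (((continuous_tent T).comp (by fun_prop)).smul hg)
    ((hasCompactSupport_tent_sub hT τ).smul_right)

lemma integral_tent_mul_le_intervalIntegral {T : ℝ} (hT : 0 < T) {g : ℝ → ℝ} (hg : Continuous g)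
    (hg₀ : ∀ t, 0 ≤ g t) :
    ∫ t, tent T t * g t ≤ ∫ t in -T..T, g t := by
  rw [← intervalIntegral.integral_eq_integral_of_support_subset
    ((Function.support_mul_subset_left _ _).trans
      ((support_tent_subset hT).trans Set.Ioo_subset_Ioc_self))]
  exact intervalIntegral.integral_mono_on (by linarith)
    (((continuous_tent T).mul hg).intervalIntegrable _ _) (hg.intervalIntegrable _ _)
    fun t _ => mul_le_of_le_one_left (hg₀ t) (tent_le_one hT.le t)

lemma integral_sub_mul_cexp (T : ℝ) {θ : ℝ} (hθ : θ ≠ 0) :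
    ∫ s in (0 : ℝ)..T, (T - s : ℂ) * cexp (I * s * θ) =
      (1 - cexp (I * T * θ)) / θ ^ 2 + I * T / θ := by
  have hθ' : (θ : ℂ) ≠ 0 := ofReal_ne_zero.2 hθ
  have hderiv : ∀ s : ℝ, HasDerivAt
      (fun s : ℝ => (T - s : ℂ) * cexp (I * s * θ) / (I * θ) - cexp (I * s * θ) / θ ^ 2)
      ((T - s : ℂ) * cexp (I * s * θ)) s := by
    intro s
    have hs : HasDerivAt (fun s : ℝ => (s : ℂ)) 1 s := (hasDerivAt_id s).ofReal_comp
    have he : HasDerivAt (fun s : ℝ => cexp (I * s * θ)) (cexp (I * s * θ) * (I * θ)) s := by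
      simpa using ((hs.const_mul I).mul_const (θ : ℂ)).cexp
    refine ((((hs.const_sub (T : ℂ)).mul he).div_const (I * θ)).sub
      (he.div_const ((θ : ℂ) ^ 2))).congr_deriv ?_
    field_simp
    linear_combination (-1 : ℂ) * I_sq
  rw [intervalIntegral.integral_eq_sub_of_hasDerivAt (fun s _ => hderiv s) (by
    apply Continuous.intervalIntegrable; fun_prop)]
  simp only [ofReal_zero, sub_self, sub_zero, zero_mul, mul_zero, Complex.exp_zero, mul_one]
  field_simp
  linear_combination (-(θ * T : ℂ)) * I_sq

lemma integral_sub_mul_cexp_add_neg (T θ : ℝ) :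
    (∫ s in (0 : ℝ)..T, (T - s : ℂ) * cexp (I * s * θ)) +
      ∫ s in (0 : ℝ)..T, (T - s : ℂ) * cexp (I * s * (-θ : ℝ)) =
        T ^ 2 * (Real.sinc (T * θ / 2) ^ 2 : ℝ) := by
  rcases eq_or_ne θ 0 with rfl | hθ
  · have h : ∫ s in (0 : ℝ)..T, (T - s : ℂ) = ((∫ s in (0 : ℝ)..T, (T - s) : ℝ) : ℂ) := by
      rw [← intervalIntegral.integral_ofReal]; push_cast; rfl
    simp only [ofReal_zero, neg_zero, mul_zero, Complex.exp_zero, mul_one, h,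
      intervalIntegral.integral_comp_sub_left (fun s => s), integral_id, zero_div, Real.sinc_zero]
    push_cast
    ring
  rcases eq_or_ne T 0 with rfl | hT
  · simp
  have hcos : cexp (I * T * θ) + cexp (-(I * T * θ)) = 2 - 4 * Complex.sin (T * θ / 2) ^ 2 := by
    have h2 : (T * θ : ℂ) = 2 * (T * θ / 2) := by ring
    have := two_cos (T * θ)
    rw [h2, Complex.cos_two_mul_eq_one_sub, ← h2, show (T * θ : ℂ) * I = I * T * θ by ring,
      show -(T * θ : ℂ) * I = -(I * T * θ) by ring] at this
    linear_combination (-1 : ℂ) * this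
  rw [integral_sub_mul_cexp T hθ, integral_sub_mul_cexp T (neg_ne_zero.2 hθ),
    Real.sinc_of_ne_zero (by positivity)]
  have hθ' : (θ : ℂ) ≠ 0 := ofReal_ne_zero.2 hθ
  have hT' : (T : ℂ) ≠ 0 := ofReal_ne_zero.2 hT
  push_cast
  field_simp
  linear_combination (-1 : ℂ) * hcos

lemma integral_tent_mul_cexp {T : ℝ} (hT : 0 < T) (θ : ℝ) :
    ∫ t, (tent T t : ℂ) * cexp (I * t * θ) = (T * Real.sinc (T * θ / 2) ^ 2 : ℝ) := by
  set f : ℝ → ℂ := fun t => (tent T t : ℂ) * cexp (I * t * θ)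
  have hf : Continuous f := by
    have := continuous_tent T
    fun_prop
  have hsupp : Function.support f ⊆ Set.Ioc (-T) T :=
    (Function.support_mul_subset_left _ _).trans <| by
      simpa using (support_tent_subset hT).trans Set.Ioo_subset_Ioc_self
  have hhalf : ∀ θ' : ℝ, ∀ s ∈ Set.uIcc 0 T, (tent T s : ℂ) * cexp (I * s * θ') =
      (T - s : ℂ) * cexp (I * s * θ') / T := by
    intro θ' s hs
    rw [Set.uIcc_of_le hT.le] at hs
    rw [tent_of_mem_Icc hT hs]
    push_cast
    ring
  rw [← intervalIntegral.integral_eq_integral_of_support_subset hsupp,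
    ← intervalIntegral.integral_add_adjacent_intervals (hf.intervalIntegrable (-T) 0)
      (hf.intervalIntegrable 0 T)]
  have hleft :
      ∫ t in -T..0, f t = ∫ s in (0 : ℝ)..T, (tent T s : ℂ) * cexp (I * s * (-θ : ℝ)) := by
    rw [← neg_zero, ← intervalIntegral.integral_comp_neg, neg_zero]
    refine intervalIntegral.integral_congr fun s _ => ?_
    simp only [f, tent_neg]
    push_cast
    ring_nf
  rw [hleft, intervalIntegral.integral_congr (hhalf _), intervalIntegral.integral_congr (hhalf θ),
    intervalIntegral.integral_div, intervalIntegral.integral_div, ← add_div,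
    add_comm, integral_sub_mul_cexp_add_neg]
  have hT' : (T : ℂ) ≠ 0 := ofReal_ne_zero.2 hT.ne'
  push_cast
  field_simp

section ExpSum

variable {ι : Type*} [Fintype ι]

noncomputable def expSum (φ : ι → ℝ) (c : ι → ℂ) (t : ℝ) : ℂ :=
  ∑ i, c i * cexp (I * t * φ i)

lemma continuous_expSum (φ : ι → ℝ) (c : ι → ℂ) : Continuous (expSum φ c) := by
  unfold expSum; fun_prop

lemma expSum_add (φ : ι → ℝ) (c : ι → ℂ) (t τ : ℝ) :
    expSum φ c (t + τ) = expSum φ (fun i => c i * cexp (I * τ * φ i)) t := by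
  simp only [expSum, ofReal_add, mul_assoc, ← Complex.exp_add]
  congr! 3
  ring

lemma expSum_pow (φ : ι → ℝ) (c : ι → ℂ) (t : ℝ) (q : ℕ) :
    expSum φ c t ^ q = expSum (fun ν : Fin q → ι => ∑ k, φ (ν k)) (fun ν => ∏ k, c (ν k)) t := by
  classical
  rw [expSum, ← Fin.prod_const, Finset.prod_univ_sum, expSum]
  refine Finset.sum_congr (by simp) fun ν _ => ?_
  rw [Finset.prod_mul_distrib, ← Complex.exp_sum]
  push_cast
  rw [Finset.mul_sum]

lemma ofReal_norm_expSum_sq (φ : ι → ℝ) (c : ι → ℂ) (t : ℝ) :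
    ((‖expSum φ c t‖ ^ 2 : ℝ) : ℂ) =
      ∑ i, ∑ j, c i * conj (c j) * cexp (I * t * (φ i - φ j : ℝ)) := by
  rw [← normSq_eq_norm_sq, ← mul_conj, expSum, map_sum, Finset.sum_mul_sum]
  refine Finset.sum_congr rfl fun i _ => Finset.sum_congr rfl fun j _ => ?_
  rw [map_mul, ← Complex.exp_conj, map_mul, map_mul, conj_I, conj_ofReal, conj_ofReal]
  push_cast
  rw [mul_sub, Complex.exp_sub, div_eq_mul_inv, ← Complex.exp_neg]
  ring_nf

lemma integral_tent_mul_norm_expSum_sq {T : ℝ} (hT : 0 < T) (φ : ι → ℝ) (c : ι → ℂ) :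
    ((∫ t, tent T t * ‖expSum φ c t‖ ^ 2 : ℝ) : ℂ) =
      ∑ i, ∑ j, c i * conj (c j) * (T * Real.sinc (T * (φ i - φ j) / 2) ^ 2 : ℝ) := by
  have hpt : ∀ t, ((tent T t * ‖expSum φ c t‖ ^ 2 : ℝ) : ℂ) =
      ∑ i, ∑ j, c i * conj (c j) * ((tent T t : ℂ) * cexp (I * t * (φ i - φ j : ℝ))) := by
    intro t
    rw [ofReal_mul, ofReal_norm_expSum_sq, Finset.mul_sum]
    refine Finset.sum_congr rfl fun i _ => ?_
    rw [Finset.mul_sum]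
    refine Finset.sum_congr rfl fun j _ => ?_
    ring
  have hint : ∀ θ : ℝ, Integrable fun t => (tent T t : ℂ) * cexp (I * t * θ) := fun θ => by
    simpa [real_smul] using integrable_tent_sub_smul hT (g := fun t => cexp (I * t * θ))
      (by fun_prop) 0
  rw [← integral_complex_ofReal, funext hpt,
    integral_finsetSum _ fun i _ => integrable_finsetSum _ fun j _ => (hint _).const_mul _]
  refine Finset.sum_congr rfl fun i _ => ?_
  rw [integral_finsetSum _ fun j _ => (hint _).const_mul _]
  refine Finset.sum_congr rfl fun j _ => ?_
  rw [integral_const_mul, integral_tent_mul_cexp hT]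

lemma integral_tent_mul_norm_expSum_sq_le {T : ℝ} (hT : 0 < T) (φ : ι → ℝ) {c : ι → ℂ}
    {a : ι → ℝ} (hca : ∀ i, ‖c i‖ ≤ a i) :
    ∫ t, tent T t * ‖expSum φ c t‖ ^ 2 ≤ ∫ t, tent T t * ‖expSum φ (fun i => (a i : ℂ)) t‖ ^ 2 := by
  set W : ι → ι → ℝ := fun i j => T * Real.sinc (T * (φ i - φ j) / 2) ^ 2
  have hW : ∀ i j, 0 ≤ W i j := fun i j => by positivity
  have ha : ∀ i, 0 ≤ a i := fun i => (norm_nonneg _).trans (hca i)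
  have hA : ∫ t, tent T t * ‖expSum φ (fun i => (a i : ℂ)) t‖ ^ 2 =
      ∑ i, ∑ j, a i * a j * W i j := by
    apply ofReal_injective
    rw [integral_tent_mul_norm_expSum_sq hT]
    push_cast
    simp [W]
  calc ∫ t, tent T t * ‖expSum φ c t‖ ^ 2
      ≤ ‖((∫ t, tent T t * ‖expSum φ c t‖ ^ 2 : ℝ) : ℂ)‖ := by
        rw [norm_real]; exact Real.le_norm_self _
    _ = ‖∑ i, ∑ j, c i * conj (c j) * (W i j : ℂ)‖ := by rw [integral_tent_mul_norm_expSum_sq hT]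
    _ ≤ ∑ i, ∑ j, ‖c i‖ * ‖c j‖ * W i j := by
        refine (norm_sum_le _ _).trans (Finset.sum_le_sum fun i _ => (norm_sum_le _ _).trans_eq ?_)
        refine Finset.sum_congr rfl fun j _ => ?_
        rw [norm_mul, norm_mul, RCLike.norm_conj, norm_real, Real.norm_of_nonneg (hW i j)]
    _ ≤ ∑ i, ∑ j, a i * a j * W i j :=
        Finset.sum_le_sum fun i _ => Finset.sum_le_sum fun j _ =>
          mul_le_mul_of_nonneg_right (mul_le_mul (hca i) (hca j) (norm_nonneg _) (ha i)) (hW i j)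
    _ = _ := hA.symm

lemma integral_tent_sub_mul_norm_expSum_pow_le {T : ℝ} (hT : 0 < T) (q : ℕ) (φ : ι → ℝ)
    {c : ι → ℂ} {a : ι → ℝ} (hca : ∀ i, ‖c i‖ ≤ a i) (τ : ℝ) :
    ∫ t, tent T (t - τ) * ‖expSum φ c t‖ ^ (2 * q) ≤
      ∫ t, tent T t * ‖expSum φ (fun i => (a i : ℂ)) t‖ ^ (2 * q) := by
  set Φ : (Fin q → ι) → ℝ := fun ν => ∑ k, φ (ν k)
  have hpow : ∀ (d : ι → ℂ) t,
      ‖expSum φ d t‖ ^ (2 * q) = ‖expSum Φ (fun ν => ∏ k, d (ν k)) t‖ ^ 2 := by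
    intro d t
    rw [mul_comm, pow_mul, ← norm_pow, expSum_pow]
  set c' : ι → ℂ := fun i => c i * cexp (I * τ * φ i)
  have hc' : ∀ ν : Fin q → ι, ‖∏ k, c' (ν k)‖ ≤ ∏ k, a (ν k) := by
    intro ν
    rw [norm_prod]
    refine Finset.prod_le_prod (fun _ _ => norm_nonneg _) fun k _ => ?_
    simpa [c', Complex.norm_exp] using hca (ν k)
  calc ∫ t, tent T (t - τ) * ‖expSum φ c t‖ ^ (2 * q)
      = ∫ t, tent T t * ‖expSum Φ (fun ν => ∏ k, c' (ν k)) t‖ ^ 2 := by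
        rw [← integral_add_right_eq_self _ τ]
        simp only [add_sub_cancel_right, expSum_add, hpow]
        rfl
    _ ≤ ∫ t, tent T t * ‖expSum Φ (fun ν => ((∏ k, a (ν k) : ℝ) : ℂ)) t‖ ^ 2 :=
        integral_tent_mul_norm_expSum_sq_le hT Φ hc'
    _ = ∫ t, tent T t * ‖expSum φ (fun i => (a i : ℂ)) t‖ ^ (2 * q) := by
        simp only [hpow, ofReal_prod]

end ExpSum

theorem stmt_2_general (q : ℕ) (N : ℕ) (φ : Fin N → ℝ) (c : Fin N → ℂ)
    (a : Fin N → ℝ) (hca : ∀ n, ‖c n‖ ≤ a n)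
    (T T₀ : ℝ) (hT : 0 < T) :
    (∫ t in (T₀ - T)..(T₀ + T), ‖∑ n, c n * Complex.exp (Complex.I * t * φ n)‖ ^ (2 * q)) ≤
      3 * ∫ t in (-T)..T, ‖∑ n, (a n : ℂ) * Complex.exp (Complex.I * t * φ n)‖ ^ (2 * q) := by
  change ∫ t in (T₀ - T)..(T₀ + T), ‖expSum φ c t‖ ^ (2 * q) ≤
    3 * ∫ t in (-T)..T, ‖expSum φ (fun n => (a n : ℂ)) t‖ ^ (2 * q)
  set g : ℝ → ℝ := fun t => ‖expSum φ c t‖ ^ (2 * q)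
  have hg : Continuous g := (continuous_expSum φ c).norm.pow _
  have hint : ∀ τ, Integrable fun t => tent T (t - τ) * g t := integrable_tent_sub_smul hT hg
  have hwindow := integral_tent_sub_mul_norm_expSum_pow_le hT q φ hca
  calc ∫ t in (T₀ - T)..(T₀ + T), g t
      ≤ ∫ t, (tent T (t - T₀) + tent T (t - (T₀ - T)) + tent T (t - (T₀ + T))) * g t :=
        intervalIntegral_le_integral_mul (by linarith) hg (fun t => by positivity)
          (fun t => add_nonneg (add_nonneg (tent_nonneg _ _) (tent_nonneg _ _)) (tent_nonneg _ _))
          (by simpa only [add_mul] using ((hint _).fun_add (hint _)).fun_add (hint _))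
          fun t ht => one_le_tent_add_tent_add_tent hT ht
    _ = (∫ t, tent T (t - T₀) * g t) + (∫ t, tent T (t - (T₀ - T)) * g t) +
          ∫ t, tent T (t - (T₀ + T)) * g t := by
        simp only [add_mul]
        rw [integral_add ((hint _).fun_add (hint _)) (hint _), integral_add (hint _) (hint _)]
    _ ≤ 3 * ∫ t, tent T t * ‖expSum φ (fun n => (a n : ℂ)) t‖ ^ (2 * q) := by
        linarith [hwindow T₀, hwindow (T₀ - T), hwindow (T₀ + T)]
    _ ≤ 3 * ∫ t in (-T)..T, ‖expSum φ (fun n => (a n : ℂ)) t‖ ^ (2 * q) := by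
        gcongr
        exact integral_tent_mul_le_intervalIntegral hT ((continuous_expSum _ _).norm.pow _)
          fun t => by positivity

theorem stmt_2 (q : ℕ) (hq : 0 < q) (N : ℕ) (φ : Fin N → ℝ) (c : Fin N → ℂ)
    (a : Fin N → ℝ) (ha : ∀ n, 0 ≤ a n) (hca : ∀ n, ‖c n‖ ≤ a n)
    (T T₀ : ℝ) (hT : 0 < T) :
    (∫ t in (T₀ - T)..(T₀ + T), ‖∑ n, c n * Complex.exp (Complex.I * t * φ n)‖ ^ (2 * q)) ≤
      3 * ∫ t in (-T)..T, ‖∑ n, (a n : ℂ) * Complex.exp (Complex.I * t * φ n)‖ ^ (2 * q) :=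
  stmt_2_general q N φ c a hca T T₀ hT
end

section
/- For every positive integer ν there exists a constant c_ν > 0 such that for all N ≥ 2 and all T > 0, c_ν·(log N)^{ν²} ≤ (1/(2T)) ∫_{-T}^{T} |∑_{n=1}^N n^{-1/2 - i t}|^{2ν} dt. -/
/-!
Write `S(t) = ∑_{n ≤ N} n^{-1/2-it}`. Then `S(t)^ν = ∑_b (b₁⋯b_ν)^{-1/2-it}` over the `ν`-tuples `b`
with entries in `[1, N]`, so `|S(t)|^{2ν}` is a sum of terms `w_b w_{b'} cos((ω_b - ω_{b'}) t)` with
`w_b ≥ 0`. Integrating against the triangle weight `1 - |t|/T ≤ 1`, whose cosine transform is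
nonnegative, we may drop every pair `(b, b')` except those with `∏ b = ∏ b'`, each of which
contributes `T w_b w_{b'}`.

Such pairs come from `ν × ν` matrices `a` of pairwise coprime integers in `[1, M]`, where
`M^ν ≤ N < (M+1)^ν`: take for `b` and `b'` the row and the column products of `a`. Then
`a_{ij} = gcd(b_i, b'_j)`, so distinct matrices give distinct pairs, and the pair contributes
`T ∏ a_{ij}⁻¹`. If the entries range over the `P`-rough numbers up to `M`, whose reciprocals add up
to `A`, a union bound over a prime `p > P` shared by two entries shows that the pairwise coprime
matrices still contribute at least `A^{ν²}/2` once `P ≥ 4ν⁴`. Finally `A ≫_P log M`, because all the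
numbers `k·P! + 1` are `P`-rough.
-/

open Finset Real
open scoped Nat

theorem Finset.sum_le_sum_sum_filter_of_forall_exists {α β : Type*} {t : Finset α}
    {u : Finset β} {f : α → ℝ} {Q : β → α → Prop} [∀ k, DecidablePred (Q k)]
    (hf : ∀ a ∈ t, 0 ≤ f a) (hcover : ∀ a ∈ t, ∃ k ∈ u, Q k a) :
    ∑ a ∈ t, f a ≤ ∑ k ∈ u, ∑ a ∈ t with Q k a, f a := by
  simp_rw [sum_filter]
  rw [sum_comm]
  refine sum_le_sum fun a ha => ?_
  obtain ⟨k, hk, hQ⟩ := hcover a ha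
  calc f a = if Q k a then f a else 0 := (if_pos hQ).symm
    _ ≤ ∑ k ∈ u, if Q k a then f a else 0 :=
      single_le_sum (f := fun k => if Q k a then f a else 0)
        (fun k _ => by split_ifs <;> simp [hf a ha]) hk

section CoprimeTuples

def coprimeTuples (ι : Type*) [Fintype ι] [DecidableEq ι] (s : Finset ℕ) : Finset (ι → ℕ) :=
  {a ∈ Fintype.piFinset fun _ : ι => s | ∀ x y, x ≠ y → Nat.Coprime (a x) (a y)}

variable {s : Finset ℕ} {P : ℕ}

theorem sum_inv_filter_dvd_le (hs : ∀ v ∈ s, ∀ d, d ∣ v → d ∈ s) (p : ℕ) :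
    ∑ v ∈ s with p ∣ v, (v : ℝ)⁻¹ ≤ (p : ℝ)⁻¹ * ∑ v ∈ s, (v : ℝ)⁻¹ := by
  have hsub : {v ∈ s | p ∣ v} ⊆ s.image (p * ·) := by
    intro v hv
    obtain ⟨hvs, u, rfl⟩ := mem_filter.mp hv
    exact mem_image.mpr ⟨u, hs _ hvs u (dvd_mul_left u p), rfl⟩
  calc ∑ v ∈ s with p ∣ v, (v : ℝ)⁻¹
      ≤ ∑ v ∈ s.image (p * ·), (v : ℝ)⁻¹ :=
        sum_le_sum_of_subset_of_nonneg hsub fun _ _ _ => by positivity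
    _ ≤ ∑ u ∈ s, ((p * u : ℕ) : ℝ)⁻¹ := sum_image_le_of_nonneg fun _ _ => by positivity
    _ = (p : ℝ)⁻¹ * ∑ v ∈ s, (v : ℝ)⁻¹ := by
        simp only [mul_sum, Nat.cast_mul, mul_inv]

theorem sum_prime_inv_sq_le (hP : ∀ p ∈ s, p.Prime → P < p) :
    ∑ p ∈ s with p.Prime, ((p : ℝ) ^ 2)⁻¹ ≤ 2 / (P + 1) := by
  have hsub : {p ∈ s | p.Prime} ⊆ Ioo P (s.sup id + 1) := fun p hp => by
    obtain ⟨hps, hpp⟩ := mem_filter.mp hp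
    exact mem_Ioo.mpr ⟨hP p hps hpp, Nat.lt_succ_of_le (le_sup (f := id) hps)⟩
  exact (sum_le_sum_of_subset_of_nonneg hsub fun _ _ _ => by positivity).trans
    (sum_Ioo_inv_sq_le _ _)

variable {ι : Type*} [Fintype ι] [DecidableEq ι]

theorem sum_piFinset_prod_inv (s : Finset ℕ) :
    ∑ a ∈ Fintype.piFinset fun _ : ι => s, ∏ x, (a x : ℝ)⁻¹ =
      (∑ v ∈ s, (v : ℝ)⁻¹) ^ Fintype.card ι := by
  rw [← card_univ, ← prod_const]
  exact (prod_univ_sum (fun _ => s) fun _ v => (v : ℝ)⁻¹).symm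

theorem sum_prod_inv_filter_dvd_dvd_le (hs : ∀ v ∈ s, ∀ d, d ∣ v → d ∈ s) {x y : ι}
    (hxy : x ≠ y) (p : ℕ) :
    ∑ a ∈ Fintype.piFinset (fun _ : ι => s) with p ∣ a x ∧ p ∣ a y, ∏ z, (a z : ℝ)⁻¹ ≤
      (∑ v ∈ s, (v : ℝ)⁻¹) ^ Fintype.card ι * ((p : ℝ) ^ 2)⁻¹ := by
  set A := ∑ v ∈ s, (v : ℝ)⁻¹
  let t : ι → Finset ℕ := fun z => if z ∈ ({x, y} : Finset ι) then {v ∈ s | p ∣ v} else s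
  have ht : {a ∈ Fintype.piFinset (fun _ : ι => s) | p ∣ a x ∧ p ∣ a y} = Fintype.piFinset t := by
    ext a
    simp only [t, mem_filter, Fintype.mem_piFinset, mem_insert, mem_singleton]
    grind
  have hbound : ∀ z, ∑ v ∈ t z, (v : ℝ)⁻¹ ≤
      A * (if z ∈ ({x, y} : Finset ι) then (p : ℝ)⁻¹ else 1) := by
    intro z
    simp only [t]
    split_ifs
    · rw [mul_comm]; exact sum_inv_filter_dvd_le hs p
    · rw [mul_one]
  rw [ht, ← prod_univ_sum t fun _ v => (v : ℝ)⁻¹]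
  calc ∏ z, ∑ v ∈ t z, (v : ℝ)⁻¹
      ≤ ∏ z, A * (if z ∈ ({x, y} : Finset ι) then (p : ℝ)⁻¹ else 1) :=
        prod_le_prod (fun _ _ => by positivity) fun z _ => hbound z
    _ = A ^ Fintype.card ι * ((p : ℝ) ^ 2)⁻¹ := by
        rw [prod_mul_distrib, prod_const, card_univ, Fintype.prod_ite_mem, prod_const,
          card_pair hxy, inv_pow]

/-- Two entries that are not coprime share a prime `p ∈ s`; sum over the two positions and `p`. -/
theorem sum_prod_inv_filter_not_coprime_le (hs : ∀ v ∈ s, ∀ d, d ∣ v → d ∈ s)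
    (hP : ∀ p ∈ s, p.Prime → P < p) :
    ∑ a ∈ Fintype.piFinset (fun _ : ι => s) with ¬ ∀ x y, x ≠ y → Nat.Coprime (a x) (a y),
        ∏ x, (a x : ℝ)⁻¹ ≤
      (∑ v ∈ s, (v : ℝ)⁻¹) ^ Fintype.card ι * (Fintype.card ι ^ 2 * (2 / (P + 1))) := by
  set A := ∑ v ∈ s, (v : ℝ)⁻¹
  set pi := Fintype.piFinset fun _ : ι => s
  set K := (univ : Finset ι).offDiag ×ˢ {p ∈ s | p.Prime}
  have hcover : ∀ a ∈ {a ∈ pi | ¬ ∀ x y, x ≠ y → Nat.Coprime (a x) (a y)},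
      ∃ k ∈ K, k.2 ∣ a k.1.1 ∧ k.2 ∣ a k.1.2 := by
    intro a ha
    simp only [mem_filter, not_forall] at ha
    obtain ⟨ha, x, y, hxy, hcop⟩ := ha
    obtain ⟨p, hp, hpx, hpy⟩ := Nat.Prime.not_coprime_iff_dvd.mp hcop
    have hps : p ∈ s := hs _ (Fintype.mem_piFinset.mp ha x) p hpx
    exact ⟨((x, y), p), by simp [K, hxy, hps, hp], hpx, hpy⟩
  calc _ ≤ ∑ k ∈ K, ∑ a ∈ {a ∈ pi | ¬ ∀ x y, x ≠ y → Nat.Coprime (a x) (a y)}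
          with k.2 ∣ a k.1.1 ∧ k.2 ∣ a k.1.2, ∏ x, (a x : ℝ)⁻¹ :=
        sum_le_sum_sum_filter_of_forall_exists (fun _ _ => by positivity) hcover
    _ ≤ ∑ k ∈ K, A ^ Fintype.card ι * ((k.2 : ℝ) ^ 2)⁻¹ := by
        refine sum_le_sum fun k hk => ?_
        refine (sum_le_sum_of_subset_of_nonneg (filter_subset_filter _ (filter_subset _ pi))
          fun _ _ _ => by positivity).trans ?_
        exact sum_prod_inv_filter_dvd_dvd_le hs (mem_offDiag.mp (mem_product.mp hk).1).2.2 k.2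
    _ = A ^ Fintype.card ι *
          (#(univ : Finset ι).offDiag * ∑ p ∈ s with p.Prime, ((p : ℝ) ^ 2)⁻¹) := by
        simp only [K, sum_product, ← mul_sum, sum_const, nsmul_eq_mul]
    _ ≤ A ^ Fintype.card ι * (Fintype.card ι ^ 2 * (2 / (P + 1))) := by
        gcongr
        · rw [offDiag_card, card_univ, sq]
          exact_mod_cast Nat.sub_le _ _
        · exact sum_prime_inv_sq_le hP

theorem sum_prod_inv_coprimeTuples_ge (hs : ∀ v ∈ s, ∀ d, d ∣ v → d ∈ s)
    (hP : ∀ p ∈ s, p.Prime → P < p) :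
    (∑ v ∈ s, (v : ℝ)⁻¹) ^ Fintype.card ι * (1 - Fintype.card ι ^ 2 * (2 / (P + 1))) ≤
      ∑ a ∈ coprimeTuples ι s, ∏ x, (a x : ℝ)⁻¹ := by
  have htotal := sum_filter_add_sum_filter_not (Fintype.piFinset fun _ : ι => s)
    (fun a => ∀ x y, x ≠ y → Nat.Coprime (a x) (a y)) fun a => ∏ x, (a x : ℝ)⁻¹
  rw [sum_piFinset_prod_inv] at htotal
  have hbad := sum_prod_inv_filter_not_coprime_le (ι := ι) hs hP
  rw [coprimeTuples]
  linarith

end CoprimeTuples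

/-- Not Mathlib's `Nat.roughNumbersUpTo`, which collects the numbers that are not smooth. -/
def roughUpTo (P M : ℕ) : Finset ℕ := {n ∈ Icc 1 M | ∀ p ∈ n.primeFactors, P < p}

section Rough

variable {P M : ℕ}

theorem mem_roughUpTo {n : ℕ} :
    n ∈ roughUpTo P M ↔ 1 ≤ n ∧ n ≤ M ∧ ∀ p, p.Prime → p ∣ n → P < p := by
  simp only [roughUpTo, mem_filter, mem_Icc, Nat.mem_primeFactors, and_assoc]
  constructor
  · rintro ⟨h1, h2, h3⟩
    exact ⟨h1, h2, fun p hp hpn => h3 p ⟨hp, hpn, by omega⟩⟩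
  · rintro ⟨h1, h2, h3⟩
    exact ⟨h1, h2, fun p hp => h3 p hp.1 hp.2.1⟩

theorem roughUpTo_subset_Icc : roughUpTo P M ⊆ Icc 1 M := filter_subset _ _

theorem one_mem_roughUpTo (hM : 1 ≤ M) : 1 ∈ roughUpTo P M :=
  mem_roughUpTo.mpr ⟨le_rfl, hM, fun _ hp hp1 => (hp.ne_one (Nat.dvd_one.mp hp1)).elim⟩

theorem mem_roughUpTo_of_dvd {v d : ℕ} (hv : v ∈ roughUpTo P M) (hd : d ∣ v) :
    d ∈ roughUpTo P M := by
  obtain ⟨hv1, hvM, hvP⟩ := mem_roughUpTo.mp hv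
  exact mem_roughUpTo.mpr ⟨Nat.pos_of_dvd_of_pos hd hv1, (Nat.le_of_dvd hv1 hd).trans hvM,
    fun p hp hpd => hvP p hp (hpd.trans hd)⟩

theorem lt_of_prime_mem_roughUpTo {p : ℕ} (hp : p ∈ roughUpTo P M) (hpp : p.Prime) : P < p :=
  (mem_roughUpTo.mp hp).2.2 p hpp dvd_rfl

theorem mul_factorial_add_one_mem_roughUpTo {k : ℕ} (hk : k * P ! + 1 ≤ M) :
    k * P ! + 1 ∈ roughUpTo P M := by
  refine mem_roughUpTo.mpr ⟨by omega, hk, fun p hp hpd => ?_⟩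
  by_contra! hpP
  have := (Nat.dvd_add_right ((Nat.dvd_factorial hp.pos hpP).mul_left k)).mp hpd
  exact hp.one_lt.ne' (Nat.dvd_one.mp this)

end Rough

theorem log_add_one_le_mul_sum_inv_mul_add_one {Q : ℕ} (hQ : 0 < Q) (K : ℕ) :
    Real.log (K + 1) ≤ Q * ∑ k ∈ range K, ((k * Q + 1 : ℕ) : ℝ)⁻¹ := by
  calc Real.log (K + 1) ≤ ∑ k ∈ range K, ((k + 1 : ℕ) : ℝ)⁻¹ := by
        have := log_add_one_le_harmonic K
        simp only [harmonic, Rat.cast_sum, Rat.cast_inv, Rat.cast_natCast] at this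
        exact_mod_cast this
    _ ≤ Q * ∑ k ∈ range K, ((k * Q + 1 : ℕ) : ℝ)⁻¹ := by
        rw [mul_sum]
        refine sum_le_sum fun k _ => ?_
        have hQ' : (1 : ℝ) ≤ Q := by exact_mod_cast hQ
        rw [← div_eq_mul_inv, inv_eq_one_div, div_le_div_iff₀ (by positivity) (by positivity)]
        push_cast
        linarith

theorem log_add_one_le_mul_sum_roughUpTo {P M : ℕ} (hM : 1 ≤ M) :
    Real.log (M + 1) ≤ (P ! + Real.log P !) * ∑ n ∈ roughUpTo P M, (n : ℝ)⁻¹ := by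
  set Q := P.factorial
  set A := ∑ n ∈ roughUpTo P M, (n : ℝ)⁻¹
  have hQ : 0 < Q := Nat.factorial_pos P
  have hA : 1 ≤ A := by
    simpa using single_le_sum (f := fun n : ℕ => (n : ℝ)⁻¹) (fun _ _ => by positivity)
      (one_mem_roughUpTo (P := P) hM)
  have hMQ : M + 1 ≤ Q * (M / Q + 1) := by
    have := Nat.lt_div_mul_add (a := M) hQ
    rw [mul_add, mul_one, mul_comm]
    omega
  have hprogression : ∑ k ∈ range (M / Q), ((k * Q + 1 : ℕ) : ℝ)⁻¹ ≤ A := by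
    have hsub : (range (M / Q)).image (fun k => k * Q + 1) ⊆ roughUpTo P M := by
      intro n hn
      obtain ⟨k, hk, rfl⟩ := mem_image.mp hn
      refine mul_factorial_add_one_mem_roughUpTo (show k * Q + 1 ≤ M from ?_)
      have hkQ : (k + 1) * Q ≤ M / Q * Q := Nat.mul_le_mul_right Q (mem_range.mp hk)
      have := Nat.div_mul_le_self M Q
      rw [add_one_mul] at hkQ
      omega
    calc ∑ k ∈ range (M / Q), ((k * Q + 1 : ℕ) : ℝ)⁻¹
        = ∑ n ∈ (range (M / Q)).image (fun k => k * Q + 1), (n : ℝ)⁻¹ :=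
          (sum_image (f := fun n : ℕ => (n : ℝ)⁻¹) fun a _ b _ h =>
            Nat.eq_of_mul_eq_mul_right hQ (Nat.add_right_cancel h)).symm
      _ ≤ A := sum_le_sum_of_subset_of_nonneg hsub fun _ _ _ => by positivity
  calc Real.log (M + 1) ≤ Real.log (Q * ((M / Q : ℕ) + 1)) := by
        gcongr
        exact_mod_cast hMQ
    _ = Real.log Q + Real.log ((M / Q : ℕ) + 1) := Real.log_mul (by positivity) (by positivity)
    _ ≤ Real.log Q * A + Q * A := by
        gcongr
        · exact le_mul_of_one_le_right (Real.log_natCast_nonneg Q) hA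
        · exact (log_add_one_le_mul_sum_inv_mul_add_one hQ _).trans
            (mul_le_mul_of_nonneg_left hprogression (by positivity))
    _ = (Q + Real.log Q) * A := by ring

section MeanValue

open intervalIntegral

variable {T : ℝ}

theorem intervalIntegral.integral_comp_abs {g : ℝ → ℝ} (hg : Continuous g) (hT : 0 ≤ T) :
    ∫ t in -T..T, g |t| = 2 * ∫ t in 0..T, g t := by
  have hint : ∀ a b : ℝ, IntervalIntegrable (fun t => g |t|) MeasureTheory.volume a b :=
    fun a b => (hg.comp continuous_abs).intervalIntegrable a b
  have hright : ∫ t in 0..T, g |t| = ∫ t in 0..T, g t :=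
    integral_congr fun t ht => by rw [Set.uIcc_of_le hT] at ht; rw [abs_of_nonneg ht.1]
  have hleft : ∫ t in -T..0, g |t| = ∫ t in 0..T, g |t| := by
    simpa using (integral_comp_neg (a := 0) (b := T) fun t => g |t|).symm
  rw [← integral_add_adjacent_intervals (hint _ 0) (hint 0 _), hleft, hright, two_mul]

theorem integral_one_sub_div_mul_cos (hT : 0 < T) {θ : ℝ} (hθ : θ ≠ 0) :
    ∫ t in 0..T, (1 - t / T) * cos (θ * t) = (1 - cos (θ * T)) / (T * θ ^ 2) := by
  have hderiv : ∀ t ∈ Set.uIcc 0 T,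
      HasDerivAt (fun t => (1 - t / T) * (sin (θ * t) / θ) - cos (θ * t) / (T * θ ^ 2))
        ((1 - t / T) * cos (θ * t)) t := by
    intro t _
    have hθt : HasDerivAt (fun t : ℝ => θ * t) θ t := by
      simpa using (hasDerivAt_id t).const_mul θ
    refine (((((hasDerivAt_id t).div_const T).const_sub 1).mul
      (((hasDerivAt_sin _).comp t hθt).div_const θ)).sub
      (((hasDerivAt_cos _).comp t hθt).div_const (T * θ ^ 2))).congr_deriv ?_
    simp only [Function.comp, id]
    field_simp
    ring
  rw [integral_eq_sub_of_hasDerivAt hderiv ((by fun_prop : Continuous _).intervalIntegrable _ _)]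
  field_simp
  simp
  ring

theorem integral_triangle_mul_cos_nonneg (hT : 0 < T) (θ : ℝ) :
    0 ≤ ∫ t in -T..T, (1 - |t| / T) * cos (θ * t) := by
  have heven : ∀ t, (1 - |t| / T) * cos (θ * t) = (1 - |t| / T) * cos (θ * |t|) := fun t => by
    rcases abs_choice t with h | h <;> simp [h]
  simp_rw [heven]
  rw [intervalIntegral.integral_comp_abs (g := fun u => (1 - u / T) * cos (θ * u)) (by fun_prop)
    hT.le]
  rcases eq_or_ne θ 0 with rfl | hθ
  · refine mul_nonneg zero_le_two (integral_nonneg hT.le fun t ht => ?_)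
    simp only [zero_mul, cos_zero, mul_one, sub_nonneg]
    exact (div_le_one hT).mpr ht.2
  · rw [integral_one_sub_div_mul_cos hT hθ]
    have := cos_le_one (θ * T)
    positivity

theorem integral_triangle (hT : 0 < T) : ∫ t in -T..T, (1 - |t| / T) = T := by
  rw [intervalIntegral.integral_comp_abs (g := fun u => 1 - u / T) (by fun_prop) hT.le]
  simp [integral_sub, intervalIntegral.integral_div]
  field_simp
  ring

variable {ι : Type*}

theorem sq_norm_sum_ofReal_mul_exp (s : Finset ι) (w ω : ι → ℝ) (t : ℝ) :
    ‖∑ i ∈ s, (w i : ℂ) * Complex.exp ((ω i * t : ℝ) * Complex.I)‖ ^ 2 =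
      ∑ p ∈ s ×ˢ s, w p.1 * w p.2 * cos ((ω p.1 - ω p.2) * t) := by
  have hterm : ∀ i j, (w i : ℂ) * Complex.exp ((ω i * t : ℝ) * Complex.I) *
      (starRingEnd ℂ) ((w j : ℂ) * Complex.exp ((ω j * t : ℝ) * Complex.I)) =
        (w i * w j : ℝ) * Complex.exp (((ω i - ω j) * t : ℝ) * Complex.I) := fun i j => by
    rw [map_mul, Complex.conj_ofReal, ← Complex.exp_conj, map_mul, Complex.conj_ofReal,
      Complex.conj_I, mul_mul_mul_comm, ← Complex.exp_add]
    push_cast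
    ring_nf
  rw [← Complex.normSq_eq_norm_sq, ← Complex.ofReal_re (Complex.normSq _), ← Complex.mul_conj,
    map_sum, sum_mul_sum, ← sum_product', Complex.re_sum]
  simp only [hterm, Complex.re_ofReal_mul, Complex.exp_ofReal_mul_I_re]

/-- Against the weight `1 - |t| / T ≤ 1`, every term of `sq_norm_sum_ofReal_mul_exp` integrates to
something nonnegative, and to `T w_i w_j` when `ω i = ω j`. -/
theorem mul_sum_le_integral_sq_norm_sum_ofReal_mul_exp (hT : 0 < T) (s : Finset ι)
    {w ω : ι → ℝ} (hw : ∀ i ∈ s, 0 ≤ w i) {D : Finset (ι × ι)} (hDs : D ⊆ s ×ˢ s)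
    (hD : ∀ p ∈ D, ω p.1 = ω p.2) :
    T * ∑ p ∈ D, w p.1 * w p.2 ≤
      ∫ t in -T..T, ‖∑ i ∈ s, (w i : ℂ) * Complex.exp ((ω i * t : ℝ) * Complex.I)‖ ^ 2 := by
  set F := fun t : ℝ => ‖∑ i ∈ s, (w i : ℂ) * Complex.exp ((ω i * t : ℝ) * Complex.I)‖ ^ 2
  have hww : ∀ p ∈ s ×ˢ s, 0 ≤ w p.1 * w p.2 := fun p hp =>
    mul_nonneg (hw _ (mem_product.mp hp).1) (hw _ (mem_product.mp hp).2)
  calc T * ∑ p ∈ D, w p.1 * w p.2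
      = ∑ p ∈ D, w p.1 * w p.2 * ∫ t in -T..T, (1 - |t| / T) * cos ((ω p.1 - ω p.2) * t) := by
        rw [mul_comm, sum_mul]
        refine sum_congr rfl fun p hp => ?_
        simp [hD p hp, integral_triangle hT]
    _ ≤ ∑ p ∈ s ×ˢ s, w p.1 * w p.2 * ∫ t in -T..T, (1 - |t| / T) * cos ((ω p.1 - ω p.2) * t) :=
        sum_le_sum_of_subset_of_nonneg hDs fun p hp _ =>
          mul_nonneg (hww p hp) (integral_triangle_mul_cos_nonneg hT _)
    _ = ∫ t in -T..T, (1 - |t| / T) * F t := by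
        simp only [F, sq_norm_sum_ofReal_mul_exp, mul_sum]
        rw [integral_finsetSum fun p _ => (by fun_prop : Continuous _).intervalIntegrable _ _]
        refine sum_congr rfl fun p _ => ?_
        rw [← integral_const_mul]
        congr 1; ext t; ring
    _ ≤ ∫ t in -T..T, F t := by
        refine integral_mono_on (by linarith) ((by fun_prop : Continuous _).intervalIntegrable _ _)
          ((by fun_prop : Continuous F).intervalIntegrable _ _) fun t _ => ?_
        refine mul_le_of_le_one_left (by positivity) ?_
        have : 0 ≤ |t| / T := by positivity
        linarith

end MeanValue

theorem natCast_prod_cpow {κ : Type*} (u : Finset κ) (f : κ → ℕ) (z : ℂ) :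
    ((∏ i ∈ u, f i : ℕ) : ℂ) ^ z = ∏ i ∈ u, (f i : ℂ) ^ z := by
  induction u using Finset.cons_induction with
  | empty => simp
  | cons i u hi ih =>
    rw [prod_cons, prod_cons, Nat.cast_mul, Complex.natCast_mul_natCast_cpow, ih]

theorem sum_natCast_cpow_pow (s : Finset ℕ) (z : ℂ) (k : ℕ) :
    (∑ n ∈ s, (n : ℂ) ^ z) ^ k =
      ∑ b ∈ Fintype.piFinset fun _ : Fin k => s, ((∏ i, b i : ℕ) : ℂ) ^ z := by
  simp_rw [natCast_prod_cpow]
  calc (∑ n ∈ s, (n : ℂ) ^ z) ^ k = ∏ _i : Fin k, ∑ n ∈ s, (n : ℂ) ^ z := by simp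
    _ = _ := prod_univ_sum (fun _ => s) fun _ n => (n : ℂ) ^ z

theorem natCast_cpow_neg_half_sub_I_mul {n : ℕ} (hn : n ≠ 0) (t : ℝ) :
    (n : ℂ) ^ (-(1 / 2 : ℂ) - Complex.I * t) =
      ((√n)⁻¹ : ℝ) * Complex.exp ((-Real.log n * t : ℝ) * Complex.I) := by
  have hsqrt : (√(n : ℝ))⁻¹ = Real.exp (-(Real.log n / 2)) := by
    rw [Real.exp_neg, Real.sqrt_eq_rpow, Real.rpow_def_of_pos (by positivity)]
    ring_nf
  rw [Complex.cpow_def_of_ne_zero (by exact_mod_cast hn), ← Complex.natCast_log, hsqrt,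
    Complex.ofReal_exp, ← Complex.exp_add]
  push_cast
  ring_nf

theorem prod_mem_Icc_one_pow {M k : ℕ} {b : Fin k → ℕ} (hb : ∀ i, b i ∈ Icc 1 M) :
    ∏ i, b i ∈ Icc 1 (M ^ k) := by
  simp only [mem_Icc] at hb ⊢
  refine ⟨one_le_prod' fun i _ => (hb i).1, ?_⟩
  simpa using prod_le_pow_card univ b M fun i _ => (hb i).2

theorem norm_sum_cpow_pow_two_mul_eq (N ν : ℕ) (t : ℝ) :
    ‖∑ n ∈ Icc 1 N, (n : ℂ) ^ (-(1 / 2 : ℂ) - Complex.I * t)‖ ^ (2 * ν) =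
      ‖∑ b ∈ Fintype.piFinset (fun _ : Fin ν => Icc 1 N),
        ((√(∏ i, b i : ℕ))⁻¹ : ℝ) *
          Complex.exp ((-Real.log (∏ i, b i : ℕ) * t : ℝ) * Complex.I)‖ ^ 2 := by
  rw [pow_mul', ← norm_pow, sum_natCast_cpow_pow]
  congr 2
  refine sum_congr rfl fun b hb => natCast_cpow_neg_half_sub_I_mul ?_ t
  exact Nat.one_le_iff_ne_zero.mp
    (mem_Icc.mp (prod_mem_Icc_one_pow (M := N) (Fintype.mem_piFinset.mp hb))).1

section RowColProd

variable {ι κ : Type*} [Fintype ι] [Fintype κ]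

def rowProd (a : ι × κ → ℕ) (i : ι) : ℕ := ∏ j, a (i, j)

def colProd (a : ι × κ → ℕ) (j : κ) : ℕ := ∏ i, a (i, j)

theorem prod_rowProd (a : ι × κ → ℕ) : ∏ i, rowProd a i = ∏ x, a x :=
  (Fintype.prod_prod_type a).symm

theorem prod_colProd (a : ι × κ → ℕ) : ∏ j, colProd a j = ∏ x, a x :=
  (Fintype.prod_prod_type_right a).symm

variable [DecidableEq ι] [DecidableEq κ]

theorem gcd_rowProd_colProd {a : ι × κ → ℕ} (ha : ∀ x y, x ≠ y → Nat.Coprime (a x) (a y))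
    (i : ι) (j : κ) : Nat.gcd (rowProd a i) (colProd a j) = a (i, j) := by
  have hcop : Nat.Coprime (∏ j' ∈ univ.erase j, a (i, j')) (∏ i' ∈ univ.erase i, a (i', j)) :=
    Nat.Coprime.prod_left fun j' hj' => Nat.Coprime.prod_right fun i' _ =>
      ha _ _ fun h => (mem_erase.mp hj').1 (congrArg Prod.snd h)
  rw [rowProd, colProd, ← mul_prod_erase univ _ (mem_univ j),
    ← mul_prod_erase univ _ (mem_univ i), Nat.gcd_mul_left, hcop, mul_one]

theorem injOn_rowProd_colProd :
    Set.InjOn (fun a => (rowProd a, colProd a))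
      {a : ι × κ → ℕ | ∀ x y, x ≠ y → Nat.Coprime (a x) (a y)} := by
  intro a ha b hb hab
  simp only [Prod.mk.injEq] at hab
  funext x
  rw [← gcd_rowProd_colProd ha, ← gcd_rowProd_colProd hb, hab.1, hab.2]

end RowColProd

theorem mul_sum_prod_inv_coprimeTuples_le_integral {ν M N : ℕ} (hMN : M ^ ν ≤ N)
    {s : Finset ℕ} (hs : s ⊆ Icc 1 M) {T : ℝ} (hT : 0 < T) :
    T * ∑ a ∈ coprimeTuples (Fin ν × Fin ν) s, ∏ x, (a x : ℝ)⁻¹ ≤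
      ∫ t in -T..T, ‖∑ n ∈ Icc 1 N, (n : ℂ) ^ (-(1 / 2 : ℂ) - Complex.I * t)‖ ^ (2 * ν) := by
  set X := coprimeTuples (Fin ν × Fin ν) s
  set D := X.image fun a => (rowProd a, colProd a)
  set pi := Fintype.piFinset fun _ : Fin ν => Icc 1 N
  let w : (Fin ν → ℕ) → ℝ := fun b => (√(∏ i, b i : ℕ))⁻¹
  let ω : (Fin ν → ℕ) → ℝ := fun b => -Real.log (∏ i, b i : ℕ)
  have hDs : D ⊆ pi ×ˢ pi := by
    intro p hp
    obtain ⟨a, ha, rfl⟩ := mem_image.mp hp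
    have hmem : ∀ f : Fin ν → Fin ν × Fin ν, ∏ i, a (f i) ∈ Icc 1 N := fun f =>
      Icc_subset_Icc_right hMN <| prod_mem_Icc_one_pow fun i =>
        hs (Fintype.mem_piFinset.mp (mem_filter.mp ha).1 (f i))
    exact mem_product.mpr ⟨Fintype.mem_piFinset.mpr fun i => hmem (fun j => (i, j)),
      Fintype.mem_piFinset.mpr fun j => hmem (fun i => (i, j))⟩
  have hD : ∀ p ∈ D, ω p.1 = ω p.2 := by
    intro p hp
    obtain ⟨a, -, rfl⟩ := mem_image.mp hp
    simp only [ω, prod_rowProd, prod_colProd]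
  have hweight : ∀ a ∈ X, w (rowProd a) * w (colProd a) = ∏ x, (a x : ℝ)⁻¹ := fun a _ => by
    simp only [w]
    rw [prod_rowProd, prod_colProd, ← mul_inv, Real.mul_self_sqrt (Nat.cast_nonneg _),
      Nat.cast_prod, prod_inv_distrib]
  have hX : (X : Set (Fin ν × Fin ν → ℕ)) ⊆ {a | ∀ x y, x ≠ y → Nat.Coprime (a x) (a y)} :=
    fun a ha => (mem_filter.mp ha).2
  calc T * ∑ a ∈ X, ∏ x, (a x : ℝ)⁻¹ = T * ∑ p ∈ D, w p.1 * w p.2 := by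
        rw [sum_image (injOn_rowProd_colProd.mono hX)]
        exact congrArg _ (sum_congr rfl hweight).symm
    _ ≤ _ := mul_sum_le_integral_sq_norm_sum_ofReal_mul_exp hT pi (fun _ _ => by positivity) hDs hD
    _ = _ := by simp only [w, ω, pi, norm_sum_cpow_pow_two_mul_eq]

theorem exists_pow_le_lt_add_one_pow {k : ℕ} (hk : k ≠ 0) (N : ℕ) :
    ∃ M, M ^ k ≤ N ∧ N < (M + 1) ^ k := by
  have hex : ∃ m, N < m ^ k := ⟨N + 1, (Nat.lt_succ_self N).trans_le (Nat.le_self_pow hk _)⟩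
  have h0 : Nat.find hex ≠ 0 := fun h => by
    have := Nat.find_spec hex
    rw [h, zero_pow hk] at this
    exact Nat.not_lt_zero _ this
  refine ⟨Nat.find hex - 1, not_lt.mp (Nat.find_min hex (by omega)), ?_⟩
  rw [Nat.sub_add_cancel (Nat.one_le_iff_ne_zero.mpr h0)]
  exact Nat.find_spec hex

theorem log_le_mul_sum_roughUpTo {N M k : ℕ} (P : ℕ) (hN : 0 < N) (hNM : N < (M + 1) ^ k) :
    Real.log N ≤ k * (P ! + Real.log P !) * ∑ n ∈ roughUpTo P M, (n : ℝ)⁻¹ := by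
  have hM : 1 ≤ M := by
    by_contra! h
    simp [Nat.lt_one_iff.mp h] at hNM
    omega
  calc Real.log N ≤ Real.log (((M + 1 : ℕ) : ℝ) ^ k) :=
        Real.log_le_log (by exact_mod_cast hN) (by exact_mod_cast hNM.le)
    _ = k * Real.log (M + 1) := by rw [Real.log_pow]; push_cast; ring
    _ ≤ k * ((P ! + Real.log P !) * ∑ n ∈ roughUpTo P M, (n : ℝ)⁻¹) := by
        gcongr; exact log_add_one_le_mul_sum_roughUpTo hM
    _ = _ := by ring

theorem sum_roughUpTo_inv_pow_div_two_le {ι : Type*} [Fintype ι] [DecidableEq ι] {P : ℕ}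
    (hP : 4 * Fintype.card ι ^ 2 ≤ P) (M : ℕ) :
    (∑ n ∈ roughUpTo P M, (n : ℝ)⁻¹) ^ Fintype.card ι / 2 ≤
      ∑ a ∈ coprimeTuples ι (roughUpTo P M), ∏ x, (a x : ℝ)⁻¹ := by
  have hsmall : (Fintype.card ι : ℝ) ^ 2 * (2 / (P + 1)) ≤ 1 / 2 := by
    rw [mul_div_assoc', div_le_iff₀ (by positivity)]
    have : (4 * Fintype.card ι ^ 2 : ℝ) ≤ P := by exact_mod_cast hP
    linarith
  refine le_trans ?_ (sum_prod_inv_coprimeTuples_ge (fun v hv d hd => mem_roughUpTo_of_dvd hv hd)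
    fun p hp hpp => lt_of_prime_mem_roughUpTo hp hpp)
  rw [div_eq_mul_one_div]
  gcongr
  linarith

open MeasureTheory Complex

theorem stmt_9 (ν : ℕ) (hν : 0 < ν) :
    ∃ c : ℝ, 0 < c ∧ ∀ (N : ℕ), 2 ≤ N → ∀ T : ℝ, 0 < T →
      c * (Real.log N) ^ (ν ^ 2) ≤
        (1 / (2 * T)) *
          ∫ t in (-T)..T,
            ‖∑ n ∈ Finset.Icc 1 N, (n : ℂ) ^ (-(1 / 2 : ℂ) - Complex.I * t)‖ ^ (2 * ν) := by
  set P := 4 * (ν ^ 2) ^ 2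
  set C : ℝ := ν * (P ! + Real.log P !)
  have hC : 0 < C := by
    have : 0 ≤ Real.log P ! := Real.log_natCast_nonneg _
    positivity
  refine ⟨(4 * C ^ (ν ^ 2))⁻¹, by positivity, fun N hN T hT => ?_⟩
  obtain ⟨M, hMN, hNM⟩ := exists_pow_le_lt_add_one_pow hν.ne' N
  set A := ∑ n ∈ roughUpTo P M, (n : ℝ)⁻¹
  set U := ∑ a ∈ coprimeTuples (Fin ν × Fin ν) (roughUpTo P M), ∏ x, (a x : ℝ)⁻¹
  have hlogN : Real.log N ≤ C * A := log_le_mul_sum_roughUpTo P (by omega) hNM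
  have hcard : Fintype.card (Fin ν × Fin ν) = ν ^ 2 := by simp [sq]
  have hcoprime : A ^ (ν ^ 2) / 2 ≤ U := by
    have := sum_roughUpTo_inv_pow_div_two_le (ι := Fin ν × Fin ν) (P := P) (by rw [hcard]) M
    rwa [hcard] at this
  have hintegral := mul_sum_prod_inv_coprimeTuples_le_integral hMN
    (roughUpTo_subset_Icc (P := P)) hT
  have hlog : 0 ≤ Real.log N := Real.log_natCast_nonneg N
  calc (4 * C ^ (ν ^ 2))⁻¹ * Real.log N ^ (ν ^ 2) = (Real.log N / C) ^ (ν ^ 2) / 4 := by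
        rw [div_pow]; field_simp
    _ ≤ A ^ (ν ^ 2) / 4 := by gcongr; rwa [div_le_iff₀ hC, mul_comm]
    _ ≤ 1 / (2 * T) * (T * U) := by
        rw [← mul_assoc, one_div, mul_inv, mul_assoc _ T⁻¹ T, inv_mul_cancel₀ hT.ne']
        linarith
    _ ≤ _ := by gcongr
end
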